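/- For every integer $d \ge 1$, the identity $\sum_{t=0}^{d} \dfrac{v^{(1-d)t} \prod_{j=t+1}^{d}(v^j + v^{-j})}{[d-t]!} (v - v^{-1})^{t} = \dfrac{2 v^{d} \prod_{j=1}^{d-1}(v^{j}+v^{-j})}{[d]!}$ holds in $\mathbb{Q}(v)$. -/

import Mathlib

noncomputable section

abbrev K : Type := RatFunc ℚ

/-- The indeterminate `v` in `ℚ(v)`. -/
def v : K := RatFunc.X

/-- Quantum integer `[m] = (v^m - v^{-m})/(v - v^{-1})`. -/
def qint (m : ℤ) : K := (v ^ m - v ^ (-m)) / (v - v⁻¹)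

/-- Quantum factorial `[r]! = ∏_{i=1}^r [i]`. -/
def qfact (r : ℕ) : K := ∏ i ∈ Finset.range r, qint ((i : ℤ) + 1)

/-- Quantum double factorial `[2r]!! = ∏_{i=1}^r [2i]`. -/
def qdfact (r : ℕ) : K := ∏ i ∈ Finset.range r, qint (2 * ((i : ℤ) + 1))

/-- Balanced Gaussian binomial coefficient `[m][m-1]⋯[m-r+1]/[r]!`. -/
def qbinom (m : ℤ) (r : ℕ) : K := (∏ i ∈ Finset.range r, qint (m - (i : ℤ))) / qfact r

/-- Gaussian binomial with integer lower index, vanishing for negative lower index. -/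
def qbinomZ (m r : ℤ) : K := if 0 ≤ r then qbinom m r.toNat else 0

/-!
Multiplying by `[d]!` turns `(v - v⁻¹)^t [d]! / [d-t]!` into the falling product
`S_t = ∏_{i<t} (v^{d-i} - v^{i-d})`, so it suffices to evaluate
`∑_{t ≤ d} v^{(1-d)t} S_t ∏_{j=t+1}^{d} {j}` with `{j} = v^j + v^{-j}`. After multiplication by
`{d}` the partial sums up to `k` telescope to `2 v^d ∏_{j ≤ k} {j} - v^{-dk} S_{k+1}`, and
`S_{d+1}` vanishes because it contains the factor `v^0 - v^0`.
-/

open Finset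

section LaurentIdentity

variable {F : Type*} [Field F] {x : F}

def zpowAddNeg (x : F) (m : ℤ) : F := x ^ m + x ^ (-m)

def zpowSubNeg (x : F) (m : ℤ) : F := x ^ m - x ^ (-m)

def fallingProd (x : F) (d : ℤ) (t : ℕ) : F := ∏ i ∈ range t, zpowSubNeg x (d - i)

lemma pow_mul_zpowAddNeg (hx : x ≠ 0) (n : ℕ) : x ^ n * zpowAddNeg x n = x ^ (2 * n) + 1 := by
  simp only [zpowAddNeg, mul_add, ← zpow_natCast, ← zpow_add₀ hx, add_neg_cancel, zpow_zero]
  push_cast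
  ring_nf

lemma pow_mul_zpowSubNeg (hx : x ≠ 0) (n : ℕ) : x ^ n * zpowSubNeg x n = x ^ (2 * n) - 1 := by
  simp only [zpowSubNeg, mul_sub, ← zpow_natCast, ← zpow_add₀ hx, add_neg_cancel, zpow_zero]
  push_cast
  ring_nf

lemma fallingProd_succ (d : ℤ) (t : ℕ) :
    fallingProd x d (t + 1) = fallingProd x d t * zpowSubNeg x (d - t) :=
  prod_range_succ _ _

lemma fallingProd_succ_self (d : ℕ) : fallingProd x d (d + 1) = 0 :=
  prod_eq_zero (self_mem_range_succ d) (by simp [zpowSubNeg])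

lemma zpowAddNeg_mul_sub (hx : x ≠ 0) (d n : ℤ) :
    zpowAddNeg x (n + 1) * x ^ (-(d * n)) - zpowAddNeg x d * x ^ ((1 - d) * (n + 1))
      = x ^ (-(d * (n + 1))) * zpowSubNeg x (d - (n + 1)) := by
  simp only [zpowAddNeg, zpowSubNeg, add_mul, mul_sub, ← zpow_add₀ hx]
  ring_nf

lemma zpowAddNeg_mul_sum (hx : x ≠ 0) (d : ℤ) (k : ℕ) :
    zpowAddNeg x d * ∑ t ∈ range (k + 1),
        x ^ ((1 - d) * t) * fallingProd x d t * ∏ j ∈ Icc (t + 1) k, zpowAddNeg x j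
      = 2 * x ^ d * ∏ j ∈ Icc 1 k, zpowAddNeg x j - x ^ (-(d * k)) * fallingProd x d (k + 1) := by
  induction k with
  | zero => simp [fallingProd, zpowAddNeg, zpowSubNeg, two_mul]
  | succ k ih =>
    have hprod (t : ℕ) (ht : t ∈ range (k + 1)) :
        ∏ j ∈ Icc (t + 1) (k + 1), zpowAddNeg x j
          = (∏ j ∈ Icc (t + 1) k, zpowAddNeg x j) * zpowAddNeg x (k + 1) := by
      rw [prod_Icc_succ_top (by simpa using ht)]
      push_cast
      rfl
    have hstep := zpowAddNeg_mul_sub hx d k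
    rw [sum_range_succ, sum_congr rfl fun t ht => by rw [hprod t ht, ← mul_assoc], ← sum_mul,
      Icc_eq_empty (by omega), prod_empty, prod_Icc_succ_top (by omega),
      fallingProd_succ _ (k + 1)]
    push_cast at hstep ⊢
    linear_combination zpowAddNeg x (k + 1) * ih - fallingProd x d (k + 1) * hstep

lemma sum_zpow_mul_fallingProd_mul_prod (hx : x ≠ 0) (d : ℕ) (hd : 1 ≤ d)
    (hc : zpowAddNeg x d ≠ 0) :
    ∑ t ∈ range (d + 1),
        x ^ ((1 - (d : ℤ)) * t) * fallingProd x d t * ∏ j ∈ Icc (t + 1) d, zpowAddNeg x j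
      = 2 * x ^ d * ∏ j ∈ Icc 1 (d - 1), zpowAddNeg x j := by
  apply mul_left_cancel₀ hc
  obtain ⟨e, rfl⟩ : ∃ e, d = e + 1 := ⟨d - 1, by omega⟩
  rw [zpowAddNeg_mul_sum hx, fallingProd_succ_self, mul_zero, sub_zero,
    prod_Icc_succ_top (by omega), Nat.add_sub_cancel, zpow_natCast]
  ring

end LaurentIdentity

lemma v_ne_zero : v ≠ 0 := RatFunc.X_ne_zero

lemma v_pow_add_one_ne_zero {n : ℕ} (hn : 0 < n) : v ^ n + 1 ≠ 0  := by
  simpa [v] using (map_ne_zero_iff _ (RatFunc.algebraMap_injective ℚ)).2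
    (Polynomial.X_pow_add_C_ne_zero hn (1 : ℚ))

lemma v_pow_sub_one_ne_zero {n : ℕ} (hn : 0 < n) : v ^ n - 1 ≠ 0  := by
  simpa [v] using (map_ne_zero_iff _ (RatFunc.algebraMap_injective ℚ)).2
    (Polynomial.X_pow_sub_C_ne_zero hn (1 : ℚ))

lemma zpowAddNeg_v_ne_zero {n : ℕ} (hn : 0 < n) : zpowAddNeg v n ≠ 0 := fun h =>
  v_pow_add_one_ne_zero (by omega : 0 < 2 * n) (by rw [← pow_mul_zpowAddNeg v_ne_zero, h, mul_zero])

lemma zpowSubNeg_v_ne_zero {n : ℕ} (hn : 0 < n) : zpowSubNeg v n ≠ 0 := fun h =>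
  v_pow_sub_one_ne_zero (by omega : 0 < 2 * n) (by rw [← pow_mul_zpowSubNeg v_ne_zero, h, mul_zero])

lemma v_sub_inv_eq : v - v⁻¹ = zpowSubNeg v 1 := by simp [zpowSubNeg]

lemma v_sub_inv_ne_zero : v - v⁻¹ ≠ 0 := by
  simpa [v_sub_inv_eq] using zpowSubNeg_v_ne_zero one_pos

lemma v_sub_inv_mul_qint (m : ℤ) : (v - v⁻¹) * qint m = zpowSubNeg v m :=
  mul_div_cancel₀ _ v_sub_inv_ne_zero

lemma qfact_succ (r : ℕ) : qfact (r + 1) = qfact r * qint (r + 1) :=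
  prod_range_succ _ _

lemma qfact_ne_zero (r : ℕ) : qfact r ≠ 0 :=
  prod_ne_zero_iff.2 fun i _ => div_ne_zero (by exact_mod_cast zpowSubNeg_v_ne_zero i.succ_pos)
    v_sub_inv_ne_zero

lemma v_sub_inv_pow_mul_qfact {d t : ℕ} (ht : t ≤ d) :
    (v - v⁻¹) ^ t * qfact d = qfact (d - t) * fallingProd v d t := by
  induction t with
  | zero => simp [fallingProd]
  | succ t ih =>
    obtain ⟨r, hr⟩ : ∃ r, d - t = r + 1 := ⟨d - (t + 1), by omega⟩
    have hqint : ((r : ℤ) + 1) = d - t := by omega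
    rw [pow_succ, mul_right_comm, ih (by omega), hr, qfact_succ, fallingProd_succ,
      show d - (t + 1) = r by omega, ← v_sub_inv_mul_qint, hqint]
    ring

theorem stmt7 (d : ℕ) (hd : 1 ≤ d) :
    ∑ t ∈ Finset.range (d + 1),
      v ^ ((1 - (d : ℤ)) * t) *
        (∏ j ∈ Finset.Icc (t + 1) d, (v ^ (j : ℤ) + v ^ (-(j : ℤ)))) / qfact (d - t) *
        (v - v⁻¹) ^ t
    = 2 * v ^ d *
        (∏ j ∈ Finset.Icc 1 (d - 1), (v ^ (j : ℤ) + v ^ (-(j : ℤ)))) / qfact d := by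
  have hterm (t : ℕ) (ht : t ∈ range (d + 1)) :
      v ^ ((1 - (d : ℤ)) * t) * (∏ j ∈ Icc (t + 1) d, zpowAddNeg v j) / qfact (d - t) *
          (v - v⁻¹) ^ t
        = v ^ ((1 - (d : ℤ)) * t) * fallingProd v d t * (∏ j ∈ Icc (t + 1) d, zpowAddNeg v j) /
          qfact d := by
    rw [eq_div_iff (qfact_ne_zero d), mul_assoc _ ((v - v⁻¹) ^ t),
      v_sub_inv_pow_mul_qfact (Nat.lt_succ_iff.1 (mem_range.1 ht))]
    field_simp [qfact_ne_zero]
  refine (sum_congr rfl hterm).trans ?_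
  rw [← sum_div, sum_zpow_mul_fallingProd_mul_prod v_ne_zero d hd (zpowAddNeg_v_ne_zero hd)]
  rfl
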